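/- arXiv:2309.00561 — 5 statements merged into one kernel-verified Lean document; each statement's English description precedes it below -/
import Mathlib

section
/- Let n ≥ 1 be a natural number and set θ_min = arcsin(1/√(2^n)). Then for every real θ with θ_min ≤ θ ≤ π/2 there exists a natural number m with m ≤ π/(4·θ_min) such that sin²((2m+1)θ) ≥ 1/2. -/
open Real

lemma sin_sq_half_of_mem {x : ℝ} (h1 : π / 4 ≤ x) (h2 : x ≤ 3 * π / 4) :
    (1 : ℝ) / 2 ≤ Real.sin x ^ 2 := by
  have hpi := Real.pi_pos
  have hs : Real.sqrt 2 / 2 ≤ Real.sin x := by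
    rcases le_or_gt x (π / 2) with hx | hx
    · calc Real.sqrt 2 / 2 = Real.sin (π / 4) := (Real.sin_pi_div_four).symm
        _ ≤ Real.sin x :=
          Real.sin_le_sin_of_le_of_le_pi_div_two (by linarith) hx h1
    · have : Real.sin x = Real.sin (π - x) := (Real.sin_pi_sub x).symm
      rw [this]
      calc Real.sqrt 2 / 2 = Real.sin (π / 4) := (Real.sin_pi_div_four).symm
        _ ≤ Real.sin (π - x) :=
          Real.sin_le_sin_of_le_of_le_pi_div_two (by linarith) (by linarith) (by linarith)
  have h0 : (0:ℝ) ≤ Real.sqrt 2 / 2 := by positivity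
  calc (1:ℝ)/2 = (Real.sqrt 2 / 2) ^ 2 := by
        rw [div_pow, Real.sq_sqrt (by norm_num : (0:ℝ) ≤ 2)]; norm_num
    _ ≤ Real.sin x ^ 2 := by
        exact pow_le_pow_left₀ h0 hs 2

/-- Let `n ≥ 1` and `θ_min = arcsin(1/√(2^n))`. For every `θ` with `θ_min ≤ θ ≤ π/2`
there exists `m : ℕ` with `m ≤ π/(4 θ_min)` and `sin²((2m+1)θ) ≥ 1/2`. -/
theorem stmt_2 (n : ℕ) (hn : 1 ≤ n) (θ : ℝ)
    (hθ₁ : Real.arcsin (1 / Real.sqrt (2 ^ n)) ≤ θ) (hθ₂ : θ ≤ π / 2) :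
    ∃ m : ℕ, (m : ℝ) ≤ π / (4 * Real.arcsin (1 / Real.sqrt (2 ^ n))) ∧
      (1 : ℝ) / 2 ≤ Real.sin ((2 * (m : ℝ) + 1) * θ) ^ 2 := by
  have hpi := Real.pi_pos
  set t := Real.arcsin (1 / Real.sqrt (2 ^ n)) with ht
  have h2n : (2:ℝ) ≤ (2:ℝ) ^ n := by
    calc (2:ℝ) = 2 ^ 1 := (pow_one 2).symm
      _ ≤ 2 ^ n := by exact pow_le_pow_right₀ (by norm_num) hn
  have hpos : (0:ℝ) < 1 / Real.sqrt (2 ^ n) := by positivity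
  have ht0 : 0 < t := Real.arcsin_pos.mpr hpos
  have hθ0 : 0 < θ := lt_of_lt_of_le ht0 hθ₁
  rcases le_or_gt (π / 4) θ with hc | hc
  · -- m = 0
    refine ⟨0, ?_, ?_⟩
    · simp only [Nat.cast_zero]
      positivity
    · have : (2 * ((0:ℕ) : ℝ) + 1) * θ = θ := by push_cast; ring
      rw [this]
      exact sin_sq_half_of_mem hc (by linarith)
  · -- m = ceil
    set m : ℕ := ⌈(π / 4 - θ) / (2 * θ)⌉₊ with hm
    have harg : 0 ≤ (π / 4 - θ) / (2 * θ) := by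
      apply div_nonneg (by linarith) (by linarith)
    have hmge : (π / 4 - θ) / (2 * θ) ≤ (m : ℝ) := Nat.le_ceil _
    have hmlt : (m : ℝ) < (π / 4 - θ) / (2 * θ) + 1 := Nat.ceil_lt_add_one harg
    have hlow : π / 4 ≤ (2 * (m : ℝ) + 1) * θ := by
      have := (div_le_iff₀ (by linarith : (0:ℝ) < 2 * θ)).mp hmge
      nlinarith
    have harg' : (π / 4 - θ) / (2 * θ) * (2 * θ) = π / 4 - θ :=
      div_mul_cancel₀ _ (by linarith)
    have hmlt' : (m : ℝ) * (2 * θ) < π / 4 + θ := by nlinarith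
    have hhigh : (2 * (m : ℝ) + 1) * θ ≤ 3 * π / 4 := by nlinarith
    refine ⟨m, ?_, sin_sq_half_of_mem hlow hhigh⟩
    -- m < π/(8θ) + 1/2 ≤ π/(4θ) ≤ π/(4t)
    have h1 : (m : ℝ) ≤ π / (4 * θ) := by
      rw [le_div_iff₀ (by linarith : (0:ℝ) < 4 * θ)]
      nlinarith [hmlt']
    calc (m : ℝ) ≤ π / (4 * θ) := h1
      _ ≤ π / (4 * t) := by
        apply div_le_div_of_nonneg_left (le_of_lt hpi) (by linarith) (by linarith)
end

section
/- Coupon collector's problem: let N ≥ 1 be a natural number and let (X_i)_{i∈ℕ} be an i.i.d. sequence of random variables each uniformly distributed on Fin N (formally, the coordinate maps on the countable product of the uniform probability measure on Fin N). Define the stopping time T(ω) as the least t such that {X_1(ω), …, X_t(ω)} = Fin N. Then the expectation of T equals N · ∑_{k=1}^{N} 1/k (which is N·ln N up to lower-order terms). -/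
open MeasureTheory ProbabilityTheory Finset
open scoped ENNReal

/-!
By the tail-sum formula, `E[T] = ∑_{t ≥ 0} P(T > t)`, and almost surely `T > t` exactly when some
value is missed by the first `t` draws. By inclusion–exclusion and independence,
`P(T > t) = ∑_{∅ ≠ u} (-1)^(|u|+1) (1 - |u|/N)^t`. Summing the geometric series gives
`N ∑_{∅ ≠ u} (-1)^(|u|+1) / |u| = N ∑_{k=1}^N (-1)^(k+1) C(N,k) / k`, and this alternating
binomial sum is the harmonic number `H_N`.
-/

theorem sum_range_alternating_choose_succ_div (n : ℕ) :
    ∑ k ∈ range n, (-1 : ℝ) ^ k * n.choose (k + 1) / (k + 1) =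
      ∑ k ∈ range n, 1 / ((k : ℝ) + 1) := by
  induction n with
  | zero => simp
  | succ n ih =>
    have hpascal : ∀ k ∈ range (n + 1), (-1 : ℝ) ^ k * (n + 1).choose (k + 1) / (k + 1) =
        (-1 : ℝ) ^ k * n.choose k / (k + 1) + (-1 : ℝ) ^ k * n.choose (k + 1) / (k + 1) := by
      intro k _
      rw [Nat.choose_succ_succ]
      push_cast
      ring
    have hlast : ∑ k ∈ range (n + 1), (-1 : ℝ) ^ k * n.choose (k + 1) / (k + 1) =
        ∑ k ∈ range n, (-1 : ℝ) ^ k * n.choose (k + 1) / (k + 1) := by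
      simp [sum_range_succ]
    have halt : ∑ k ∈ range (n + 1), (-1 : ℝ) ^ k * (n + 1).choose (k + 1) = 1 := by
      have h : ∑ k ∈ range (n + 2), (-1 : ℝ) ^ k * (n + 1).choose k = 0 := by
        exact_mod_cast Int.alternating_sum_range_choose_of_ne n.succ_ne_zero
      rw [sum_range_succ'] at h
      simp only [pow_succ, mul_neg_one, neg_mul, sum_neg_distrib, pow_zero,
        Nat.choose_zero_right, Nat.cast_one, mul_one] at h
      linarith
    -- `(k + 1) C(n + 1, k + 1) = (n + 1) C(n, k)` reduces this to `halt`.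
    have hfirst : ∑ k ∈ range (n + 1), (-1 : ℝ) ^ k * n.choose k / (k + 1) = 1 / (n + 1) := by
      have hterm : ∀ k ∈ range (n + 1), (-1 : ℝ) ^ k * n.choose k / (k + 1) =
          (-1 : ℝ) ^ k * (n + 1).choose (k + 1) / (n + 1) := by
        intro k _
        have h : ((n : ℝ) + 1) * n.choose k = (n + 1).choose (k + 1) * ((k : ℝ) + 1) := by
          exact_mod_cast Nat.add_one_mul_choose_eq n k
        rw [div_eq_div_iff (by positivity) (by positivity)]
        linear_combination (-1 : ℝ) ^ k * h
      rw [sum_congr rfl hterm, ← sum_div, halt]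
    rw [sum_congr rfl hpascal, sum_add_distrib, hfirst, hlast, ih, sum_range_succ]
    ring

theorem sum_powerset_nonempty_alternating_div_card {β : Type*} (s : Finset β) :
    ∑ u ∈ s.powerset with u.Nonempty, (-1 : ℝ) ^ (#u + 1) / #u =
      ∑ k ∈ Icc 1 #s, 1 / (k : ℝ) := by
  rw [sum_filter_of_ne fun u _ hu => nonempty_iff_ne_empty.2 fun h => hu (by simp [h]),
    sum_powerset_apply_card (fun k => (-1 : ℝ) ^ (k + 1) / k), sum_range_succ']
  have hIcc : ∑ k ∈ Icc 1 #s, 1 / (k : ℝ) = ∑ k ∈ range #s, 1 / ((k : ℝ) + 1) := by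
    rw [range_eq_Ico]
    exact_mod_cast (sum_Ico_add' (fun k : ℕ => 1 / (k : ℝ)) 0 #s 1).symm
  rw [hIcc, ← sum_range_alternating_choose_succ_div]
  simp only [CharP.cast_eq_zero, div_zero, smul_zero, add_zero, nsmul_eq_mul]
  refine sum_congr rfl fun k _ => ?_
  push_cast
  ring

section

variable {Ω : Type*} [MeasurableSpace Ω] {μ : Measure Ω}

theorem lintegral_natCast_eq_tsum_measure_lt {T : Ω → ℕ} (hT : Measurable T) :
    ∫⁻ ω, (T ω : ℝ≥0∞) ∂μ = ∑' n, μ {ω | n < T ω} := by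
  have hmeas : ∀ n, MeasurableSet {ω | n < T ω} := fun n => measurableSet_lt measurable_const hT
  have hpt : ∀ ω, (T ω : ℝ≥0∞) = ∑' n, {ω | n < T ω}.indicator 1 ω := by
    intro ω
    rw [tsum_eq_sum (s := range (T ω)) fun n hn => Set.indicator_of_notMem (by simpa using hn) _]
    rw [sum_congr rfl fun n hn => Set.indicator_of_mem (by simpa using hn) _]
    simp
  simp_rw [hpt]
  rw [lintegral_tsum (f := fun n => {ω | n < T ω}.indicator 1)
    fun n => (measurable_one.indicator (hmeas n)).aemeasurable]
  simp_rw [lintegral_indicator_one (hmeas _)]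

theorem ProbabilityTheory.iIndepFun.measure_biInter_preimage_eq_pow {ι β : Type*}
    [MeasurableSpace β] {X : ι → Ω → β} {ν : Measure β} (hindep : iIndepFun X μ)
    (hmeas : ∀ i, Measurable (X i)) (hdist : ∀ i, μ.map (X i) = ν) {s : Set β} (hs : MeasurableSet s) (I : Finset ι) :
    μ (⋂ i ∈ I, X i ⁻¹' s) = ν s ^ #I := by
  rw [hindep.measure_inter_preimage_eq_mul I fun _ _ => hs]
  simp [← Measure.map_apply (hmeas _) hs, hdist]

end

namespace CouponCollector

variable {Ω α : Type*} (X : ℕ → Ω → α)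

def missedUpTo (y : α) (t : ℕ) : Set Ω := ⋂ i ∈ Icc 1 t, X i ⁻¹' {y}ᶜ

noncomputable def coverTime (ω : Ω) : ℕ :=
  sInf {t : ℕ | ∀ y : α, ∃ i : ℕ, 1 ≤ i ∧ i ≤ t ∧ X i ω = y}

variable {X}

theorem notMem_iUnion_missedUpTo {t : ℕ} {ω : Ω} :
    ω ∉ ⋃ y, missedUpTo X y t ↔ ∀ y : α, ∃ i : ℕ, 1 ≤ i ∧ i ≤ t ∧ X i ω = y := by
  simp [missedUpTo]

-- `coverTime` is `0` on the event that some value is never drawn, hence the second factor.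
theorem setOf_lt_coverTime (n : ℕ) :
    {ω | n < coverTime X ω} = (⋃ y, missedUpTo X y n) ∩ ⋃ t, (⋃ y, missedUpTo X y t)ᶜ := by
  ext ω
  set S := {t : ℕ | ∀ y : α, ∃ i : ℕ, 1 ≤ i ∧ i ≤ t ∧ X i ω = y}
  have hS : ∀ t, ω ∉ ⋃ y, missedUpTo X y t ↔ t ∈ S := fun t => notMem_iUnion_missedUpTo
  have hmono : ∀ s t, s ≤ t → s ∈ S → t ∈ S := fun s t hst hs y =>
    let ⟨i, h1, h2, h3⟩ := hs y; ⟨i, h1, h2.trans hst, h3⟩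
  rw [Set.mem_inter_iff, ← not_not (a := ω ∈ ⋃ y, missedUpTo X y n), hS, Set.mem_iUnion]
  simp only [Set.mem_compl_iff, hS]
  change n < sInf S ↔ n ∉ S ∧ ∃ t, t ∈ S
  constructor
  · intro h
    refine ⟨Nat.notMem_of_lt_sInf h, Set.nonempty_iff_ne_empty.2 fun hS => ?_⟩
    simp [hS] at h
  · rintro ⟨hn, t, ht⟩
    by_contra! h
    exact hn (hmono _ _ h (Nat.sInf_mem ⟨t, ht⟩))

theorem biInter_missedUpTo (u : Set α) (t : ℕ) :
    ⋂ y ∈ u, missedUpTo X y t = ⋂ i ∈ Icc 1 t, X i ⁻¹' uᶜ := by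
  ext ω
  simp only [missedUpTo, Set.mem_iInter, Set.mem_preimage, Set.mem_compl_iff,
    Set.mem_singleton_iff]
  exact ⟨fun h i hi hXi => h _ hXi i hi rfl, fun h y hy i hi hXi => h i hi (hXi ▸ hy)⟩

variable [MeasurableSpace Ω] {μ : Measure Ω} [MeasurableSpace α] [MeasurableSingletonClass α]
  {ν : Measure α}

theorem measure_biInter_missedUpTo [Finite α] (hmeas : ∀ i, Measurable (X i))
    (hindep : iIndepFun X μ) (hdist : ∀ i, μ.map (X i) = ν) (u : Set α) (t : ℕ) :
    μ (⋂ y ∈ u, missedUpTo X y t) = ν uᶜ ^ t := by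
  rw [biInter_missedUpTo, hindep.measure_biInter_preimage_eq_pow hmeas hdist
    (Set.toFinite _).measurableSet, Nat.card_Icc, Nat.add_sub_cancel]

theorem measure_missedUpTo [Finite α] (hmeas : ∀ i, Measurable (X i))
    (hindep : iIndepFun X μ) (hdist : ∀ i, μ.map (X i) = ν) (y : α) (t : ℕ) :
    μ (missedUpTo X y t) = ν {y}ᶜ ^ t := by
  simpa using measure_biInter_missedUpTo hmeas hindep hdist {y} t

theorem measure_iInter_iUnion_missedUpTo [Finite α] [IsProbabilityMeasure ν]
    (hmeas : ∀ i, Measurable (X i)) (hindep : iIndepFun X μ) (hdist : ∀ i, μ.map (X i) = ν)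
    (hpos : ∀ y, ν {y} ≠ 0) :
    μ (⋂ t, ⋃ y, missedUpTo X y t) = 0 := by
  have := Fintype.ofFinite α
  have hlt : ∀ y, ν {y}ᶜ < 1 := fun y => by
    rw [prob_compl_eq_one_sub (measurableSet_singleton y)]
    exact ENNReal.sub_lt_self ENNReal.one_ne_top one_ne_zero (hpos y)
  have hbound : ∀ t, μ (⋂ t, ⋃ y, missedUpTo X y t) ≤ ∑ y, ν {y}ᶜ ^ t := fun t =>
    calc μ (⋂ t, ⋃ y, missedUpTo X y t) ≤ μ (⋃ y, missedUpTo X y t) :=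
          measure_mono (Set.iInter_subset _ t)
      _ ≤ ∑ y, μ (missedUpTo X y t) := measure_iUnion_fintype_le μ _
      _ = ∑ y, ν {y}ᶜ ^ t := by simp_rw [measure_missedUpTo hmeas hindep hdist]
  have hlim : Filter.Tendsto (fun t => ∑ y, ν {y}ᶜ ^ t) Filter.atTop (nhds 0) := by
    simpa using tendsto_finsetSum univ fun y _ =>
      ENNReal.tendsto_pow_atTop_nhds_zero_of_lt_one (hlt y)
  exact nonpos_iff_eq_zero.1 (ge_of_tendsto' hlim hbound)

theorem measurableSet_missedUpTo (hmeas : ∀ i, Measurable (X i)) (y : α) (t : ℕ) :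
    MeasurableSet (missedUpTo X y t) :=
  (Icc 1 t).measurableSet_biInter fun i _ => hmeas i (measurableSet_singleton y).compl

theorem measurable_coverTime [Finite α] (hmeas : ∀ i, Measurable (X i)) :
    Measurable (coverTime X) := by
  have hU : ∀ t, MeasurableSet (⋃ y, missedUpTo X y t) := fun t =>
    .iUnion fun y => measurableSet_missedUpTo hmeas y t
  refine measurable_of_Ioi fun n => ?_
  change MeasurableSet {ω | n < coverTime X ω}
  rw [setOf_lt_coverTime]
  exact (hU n).inter (.iUnion fun t => (hU t).compl)

theorem measure_lt_coverTime [Finite α] [IsProbabilityMeasure ν]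
    (hmeas : ∀ i, Measurable (X i)) (hindep : iIndepFun X μ) (hdist : ∀ i, μ.map (X i) = ν)
    (hpos : ∀ y, ν {y} ≠ 0) (n : ℕ) :
    μ {ω | n < coverTime X ω} = μ (⋃ y, missedUpTo X y n) := by
  rw [setOf_lt_coverTime, measure_inter_conull]
  simpa [Set.compl_iUnion] using measure_iInter_iUnion_missedUpTo hmeas hindep hdist hpos

theorem integral_coverTime_eq_tsum [Finite α] [IsFiniteMeasure μ] [IsProbabilityMeasure ν]
    (hmeas : ∀ i, Measurable (X i)) (hindep : iIndepFun X μ) (hdist : ∀ i, μ.map (X i) = ν)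
    (hpos : ∀ y, ν {y} ≠ 0) :
    ∫ ω, (coverTime X ω : ℝ) ∂μ = ∑' n, μ.real (⋃ y, missedUpTo X y n) := by
  have hT := measurable_coverTime hmeas
  rw [integral_eq_lintegral_of_nonneg_ae (ae_of_all _ fun ω => Nat.cast_nonneg _)
    (measurable_from_nat.comp hT).aestronglyMeasurable]
  simp_rw [ENNReal.ofReal_natCast]
  rw [lintegral_natCast_eq_tsum_measure_lt hT, ENNReal.tsum_toReal_eq fun n => measure_ne_top μ _]
  simp_rw [measure_lt_coverTime hmeas hindep hdist hpos]
  rfl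

theorem measureReal_biInter_missedUpTo_uniform [Fintype α] [Nonempty α]
    [IsProbabilityMeasure μ] (hmeas : ∀ i, Measurable (X i)) (hindep : iIndepFun X μ)
    (hunif : ∀ i, μ.map (X i) = (PMF.uniformOfFintype α).toMeasure) (u : Finset α) (t : ℕ) :
    μ.real (⋂ y ∈ u, missedUpTo X y t) = (1 - #u / Fintype.card α : ℝ) ^ t := by
  have hu : MeasurableSet (u : Set α) := u.finite_toSet.measurableSet
  have := measure_biInter_missedUpTo hmeas hindep hunif u t
  rw [Finset.set_biInter_coe] at this
  rw [measureReal_def, this, ENNReal.toReal_pow, ← measureReal_def,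
    probReal_compl_eq_one_sub hu, measureReal_def,
    PMF.toMeasure_uniformOfFintype_apply _ hu]
  simp

theorem tsum_measureReal_iUnion_missedUpTo_uniform [Fintype α] [Nonempty α]
    [IsProbabilityMeasure μ] (hmeas : ∀ i, Measurable (X i)) (hindep : iIndepFun X μ)
    (hunif : ∀ i, μ.map (X i) = (PMF.uniformOfFintype α).toMeasure) :
    ∑' t, μ.real (⋃ y, missedUpTo X y t) =
      Fintype.card α * ∑ k ∈ Icc 1 (Fintype.card α), 1 / (k : ℝ) := by
  classical
  have hn : (0 : ℝ) < Fintype.card α := by exact_mod_cast Fintype.card_pos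
  have hinclusionExclusion : ∀ t, μ.real (⋃ y, missedUpTo X y t) =
      ∑ u ∈ (univ : Finset α).powerset with u.Nonempty,
        (-1 : ℝ) ^ (#u + 1) * (1 - #u / Fintype.card α : ℝ) ^ t := fun t => by
    have h := measureReal_biUnion_eq_sum_powerset (μ := μ) (t := univ)
      fun y _ => measurableSet_missedUpTo hmeas y t
    simp only [mem_univ, Set.iUnion_true] at h
    simp_rw [h, measureReal_biInter_missedUpTo_uniform hmeas hindep hunif]
  have hratio : ∀ u ∈ {u ∈ (univ : Finset α).powerset | u.Nonempty},
      0 ≤ (1 - #u / Fintype.card α : ℝ) ∧ (1 - #u / Fintype.card α : ℝ) < 1 := fun u hu => by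
    have hu0 : (0 : ℝ) < #u := by exact_mod_cast (mem_filter.1 hu).2.card_pos
    have hun : (#u : ℝ) ≤ Fintype.card α := by exact_mod_cast card_le_univ u
    constructor
    · rw [sub_nonneg, div_le_one hn]; exact hun
    · linarith [div_pos hu0 hn]
  have hgeom : ∀ u ∈ {u ∈ (univ : Finset α).powerset | u.Nonempty},
      ∑' t, (-1 : ℝ) ^ (#u + 1) * (1 - #u / Fintype.card α : ℝ) ^ t =
        Fintype.card α * ((-1 : ℝ) ^ (#u + 1) / #u) := by
    intro u hu
    rw [tsum_mul_left, tsum_geometric_of_lt_one (hratio u hu).1 (hratio u hu).2, sub_sub_cancel,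
      inv_div]
    ring
  rw [tsum_congr hinclusionExclusion, Summable.tsum_finsetSum fun u hu =>
      ((summable_geometric_of_lt_one (hratio u hu).1 (hratio u hu).2).mul_left _),
    sum_congr rfl hgeom, ← mul_sum, sum_powerset_nonempty_alternating_div_card, card_univ]

end CouponCollector

open CouponCollector in
/-- Coupon collector's problem: if `(X_i)_{i∈ℕ}` are i.i.d. random variables, each
uniformly distributed on `Fin N` (`N ≥ 1`), and `T ω` is the least `t` such that
`{X_1 ω, …, X_t ω} = Fin N`, then `E[T] = N · ∑_{k=1}^{N} 1/k`. -/
theorem stmt_4 {Ω : Type*} [MeasurableSpace Ω] (μ : Measure Ω) [IsProbabilityMeasure μ]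
    (N : ℕ) (hN : 0 < N)
    (X : ℕ → Ω → Fin N)
    (hmeas : ∀ i : ℕ, Measurable (X i))
    (hindep : iIndepFun X μ)
    (hunif : ∀ i : ℕ, Measure.map (X i) μ =
      (@PMF.uniformOfFintype (Fin N) _ ⟨⟨0, hN⟩⟩).toMeasure)
    (T : Ω → ℕ)
    (hT : ∀ ω : Ω, T ω =
      sInf {t : ℕ | ∀ y : Fin N, ∃ i : ℕ, 1 ≤ i ∧ i ≤ t ∧ X i ω = y}) :
    ∫ ω, (T ω : ℝ) ∂μ = N * ∑ k ∈ Finset.Icc 1 N, (1 : ℝ) / k := by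
  have : Nonempty (Fin N) := ⟨⟨0, hN⟩⟩
  have huniform_pos : ∀ y, (PMF.uniformOfFintype (Fin N)).toMeasure {y} ≠ 0 := fun y => by simp
  obtain rfl : T = coverTime X := funext hT
  rw [integral_coverTime_eq_tsum hmeas hindep hunif huniform_pos,
    tsum_measureReal_iUnion_missedUpTo_uniform hmeas hindep hunif, Fintype.card_fin]
end

section
/- For every natural number n and every natural number M, setting N_m = sin²(π/(2(2m+3)))·2^n for m ∈ ℕ, the sum ∑_{m=0}^{M} N_m · ln(N_m) is at most 0.58 · 2^n · ln(2^n). -/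
/-!
Write `θ_m = π/(2(2m+3))`. Since `N_m ≤ 2^n`, each term satisfies `N_m ln N_m ≤ sin²(θ_m) · 2^n ln 2^n`, so it suffices that
`∑ sin²(θ_m) ≤ 0.58`. The term `m = 0` is `sin²(π/6) = 1/4`; for `m ≥ 1`, `sin² θ ≤ θ²` and
`(2m+3)² ≥ 4(m+1)(m+2)` give `sin²(θ_m) ≤ π²/16 · (1/(m+1) - 1/(m+2))`, which telescopes to at most
`π²/32`. Finally `1/4 + π²/32 < 0.56`.
-/

open Real Finset

lemma mul_log_le_mul_log_of_le {x y : ℝ} (hx : 0 ≤ x) (hxy : x ≤ y) :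
    x * log x ≤ x * log y := by
  rcases hx.eq_or_lt with rfl | hx
  · simp
  · exact mul_le_mul_of_nonneg_left (log_le_log hx hxy) hx.le

lemma sin_sq_pi_div_le (m : ℕ) :
    sin (π / (2 * (2 * (m : ℝ) + 3))) ^ 2 ≤ π ^ 2 / 16 * (1 / ((m : ℝ) + 1) - 1 / ((m : ℝ) + 2)) := by
  have hsub : 1 / ((m : ℝ) + 1) - 1 / ((m : ℝ) + 2) = 1 / (((m : ℝ) + 1) * ((m : ℝ) + 2)) := by
    field_simp
    ring
  calc sin (π / (2 * (2 * (m : ℝ) + 3))) ^ 2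
      ≤ (π / (2 * (2 * (m : ℝ) + 3))) ^ 2 := sin_sq_le_sq
    _ = π ^ 2 / (4 * (2 * (m : ℝ) + 3) ^ 2) := by rw [div_pow, mul_pow]; norm_num
    _ ≤ π ^ 2 / (16 * (((m : ℝ) + 1) * ((m : ℝ) + 2))) :=
        div_le_div_of_nonneg_left (by positivity) (by positivity) (by nlinarith)
    _ = π ^ 2 / 16 * (1 / ((m : ℝ) + 1) - 1 / ((m : ℝ) + 2)) := by rw [hsub]; field_simp

lemma sum_sin_sq_pi_div_le (M : ℕ) :
    ∑ m ∈ range (M + 1), sin (π / (2 * (2 * (m : ℝ) + 3))) ^ 2 ≤ 0.58 := by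
  have hhead : sin (π / (2 * (2 * ((0 : ℕ) : ℝ) + 3))) ^ 2 = 1 / 4 := by
    rw [show π / (2 * (2 * ((0 : ℕ) : ℝ) + 3)) = π / 6 by norm_num, sin_pi_div_six]
    norm_num
  have htail : ∑ i ∈ range M, sin (π / (2 * (2 * ((i + 1 : ℕ) : ℝ) + 3))) ^ 2
      ≤ π ^ 2 / 16 * (1 / 2 - 1 / ((M : ℝ) + 2)) := by
    calc ∑ i ∈ range M, sin (π / (2 * (2 * ((i + 1 : ℕ) : ℝ) + 3))) ^ 2
        ≤ ∑ i ∈ range M,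
            π ^ 2 / 16 * (1 / (((i + 1 : ℕ) : ℝ) + 1) - 1 / (((i + 1 : ℕ) : ℝ) + 2)) :=
          sum_le_sum fun i _ ↦ sin_sq_pi_div_le (i + 1)
      _ = π ^ 2 / 16 * (1 / 2 - 1 / ((M : ℝ) + 2)) := by
          rw [← mul_sum]
          congr 1
          convert sum_range_sub' (fun i : ℕ ↦ 1 / ((i : ℝ) + 2)) M using 2 <;> push_cast <;> ring
  rw [sum_range_succ', hhead]
  have hM : 0 ≤ 1 / ((M : ℝ) + 2) := by positivity
  nlinarith [pi_lt_d2, pi_pos]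

/-- For all `n, M : ℕ`, with `N_m = sin²(π/(2(2m+3)))·2^n`, we have
`∑_{m=0}^{M} N_m · ln N_m ≤ 0.58 · 2^n · ln(2^n)`. -/
theorem stmt_7 (n M : ℕ) :
    ∑ m ∈ Finset.range (M + 1),
        (Real.sin (π / (2 * (2 * (m : ℝ) + 3))) ^ 2 * 2 ^ n) *
          Real.log (Real.sin (π / (2 * (2 * (m : ℝ) + 3))) ^ 2 * 2 ^ n) ≤
      0.58 * 2 ^ n * Real.log (2 ^ n) := by
  have hlog : 0 ≤ log ((2 : ℝ) ^ n) := log_nonneg (one_le_pow₀ one_le_two)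
  calc ∑ m ∈ range (M + 1),
        (sin (π / (2 * (2 * (m : ℝ) + 3))) ^ 2 * 2 ^ n) *
          log (sin (π / (2 * (2 * (m : ℝ) + 3))) ^ 2 * 2 ^ n)
      ≤ ∑ m ∈ range (M + 1),
          sin (π / (2 * (2 * (m : ℝ) + 3))) ^ 2 * (2 ^ n * log ((2 : ℝ) ^ n)) := by
        refine sum_le_sum fun m _ ↦ ?_
        rw [← mul_assoc]
        exact mul_log_le_mul_log_of_le (by positivity)
          (mul_le_of_le_one_left (by positivity) (sin_sq_le_one _))
    _ = (∑ m ∈ range (M + 1), sin (π / (2 * (2 * (m : ℝ) + 3))) ^ 2)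
          * (2 ^ n * log ((2 : ℝ) ^ n)) := (sum_mul ..).symm
    _ ≤ 0.58 * (2 ^ n * log ((2 : ℝ) ^ n)) := by
        gcongr
        exact sum_sin_sq_pi_div_le M
    _ = 0.58 * 2 ^ n * log ((2 : ℝ) ^ n) := by ring
end

section
/- There exists n₀ ∈ ℕ such that for every n ≥ n₀ and every natural number M with M ≤ √(2^n), setting N_m = sin²(π/(2(2m+3)))·2^n and s_m = max(5, N_m·ln(N_m)) for m ∈ ℕ, the total ∑_{m=0}^{M} s_m is strictly less than 2^n · ln(2^n). -/
open Real

lemma sum_inv_sq (k : ℕ) :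
    ∑ m ∈ Finset.range k, (1:ℝ)/(2*(m:ℝ)+3)^2 ≤ 1/4 - 1/(4*((k:ℝ)+1)) := by
  induction k with
  | zero => simp
  | succ k ih =>
    rw [Finset.sum_range_succ]
    have h1 : (0:ℝ) < (k:ℝ)+1 := by positivity
    have h2 : (0:ℝ) < (k:ℝ)+2 := by positivity
    have key : (1:ℝ)/(2*(k:ℝ)+3)^2 ≤ 1/(4*((k:ℝ)+1)) - 1/(4*((k:ℝ)+1+1)) := by
      rw [div_sub_div _ _ (by positivity) (by positivity),
        div_le_div_iff₀ (by positivity) (by positivity)]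
      nlinarith
    push_cast
    linarith

lemma term_bound (E : ℝ) (hE : 1 ≤ E) (m : ℕ) :
    max (5:ℝ)
        ((Real.sin (π / (2 * (2 * (m : ℝ) + 3))) ^ 2 * E) *
          Real.log (Real.sin (π / (2 * (2 * (m : ℝ) + 3))) ^ 2 * E))
      ≤ 5 + (π^2/4 * (1/(2*(m:ℝ)+3)^2)) * (E * Real.log E) := by
  set t := π / (2 * (2 * (m : ℝ) + 3)) with ht
  have h3 : (0:ℝ) < 2*(m:ℝ)+3 := by positivity
  have ht0 : 0 ≤ t := by positivity
  have htpi : t ≤ π := by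
    rw [ht]
    apply div_le_self Real.pi_nonneg
    nlinarith
  have hs0 : 0 ≤ Real.sin t := Real.sin_nonneg_of_nonneg_of_le_pi ht0 htpi
  have hs1 : Real.sin t ≤ t := Real.sin_le ht0
  have hsq : Real.sin t ^ 2 ≤ t ^ 2 := pow_le_pow_left₀ hs0 hs1 2
  have htsq : t ^ 2 = π^2/4 * (1/(2*(m:ℝ)+3)^2) := by
    rw [ht, div_pow]
    rw [mul_pow]
    field_simp
    ring
  have hE0 : (0:ℝ) ≤ E := by linarith
  have hL0 : 0 ≤ Real.log E := Real.log_nonneg hE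
  have hrhs0 : 0 ≤ (π^2/4 * (1/(2*(m:ℝ)+3)^2)) * (E * Real.log E) := by positivity
  set N := Real.sin t ^ 2 * E with hN
  have hN0 : 0 ≤ N := by positivity
  have hNle : N ≤ t^2 * E := by
    apply mul_le_mul_of_nonneg_right hsq hE0
  have hNE : N ≤ E := by
    have : Real.sin t ^ 2 ≤ 1 := Real.sin_sq_le_one t
    nlinarith
  rcases le_or_gt N 1 with hc | hc
  · have hlogN : Real.log N ≤ 0 := Real.log_nonpos hN0 hc
    have : N * Real.log N ≤ 0 := mul_nonpos_of_nonneg_of_nonpos hN0 hlogN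
    apply max_le <;> linarith
  · have hlogN0 : 0 ≤ Real.log N := Real.log_nonneg (le_of_lt hc)
    have hlogle : Real.log N ≤ Real.log E := Real.log_le_log (by linarith) hNE
    have : N * Real.log N ≤ (t^2 * E) * Real.log E := by
      apply mul_le_mul hNle hlogle hlogN0
      positivity
    rw [htsq] at this
    apply max_le
    · linarith
    · calc N * Real.log N ≤ (π^2/4 * (1/(2*(m:ℝ)+3)^2)) * E * Real.log E := this
        _ = (π^2/4 * (1/(2*(m:ℝ)+3)^2)) * (E * Real.log E) := by ring
        _ ≤ 5 + _ := by linarith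

/-- There is `n₀` such that for all `n ≥ n₀` and all `M ≤ √(2^n)`, with
`N_m = sin²(π/(2(2m+3)))·2^n` and `s_m = max(5, N_m ln N_m)`, the total number of
samples `∑_{m=0}^{M} s_m` is strictly less than `2^n · ln(2^n)`. -/
theorem stmt_8 :
    ∃ n₀ : ℕ, ∀ n : ℕ, n₀ ≤ n → ∀ M : ℕ, (M : ℝ) ≤ Real.sqrt (2 ^ n) →
      ∑ m ∈ Finset.range (M + 1),
          max (5 : ℝ)
            ((Real.sin (π / (2 * (2 * (m : ℝ) + 3))) ^ 2 * 2 ^ n) *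
              Real.log (Real.sin (π / (2 * (2 * (m : ℝ) + 3))) ^ 2 * 2 ^ n)) <
        2 ^ n * Real.log (2 ^ n) := by
  refine ⟨10, fun n hn M hM => ?_⟩
  set E := (2:ℝ)^n with hEdef
  have hE1024 : (1024:ℝ) ≤ E := by
    calc (1024:ℝ) = 2^10 := by norm_num
      _ ≤ 2^n := pow_le_pow_right₀ (by norm_num) hn
  have hE1 : (1:ℝ) ≤ E := by linarith
  have hE0 : (0:ℝ) ≤ E := by linarith
  set L := Real.log E with hLdef
  have hL6 : 6 ≤ L := by
    rw [hLdef, hEdef, Real.log_pow]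
    have h2 : (0.6931471803:ℝ) < Real.log 2 := Real.log_two_gt_d9
    have hn' : (10:ℝ) ≤ (n:ℝ) := by exact_mod_cast hn
    nlinarith
  have hL0 : 0 ≤ L := by linarith
  have hM2 : ((M:ℝ))^2 ≤ E := by
    have h := Real.sq_sqrt hE0
    calc ((M:ℝ))^2 ≤ (Real.sqrt E)^2 := pow_le_pow_left₀ (Nat.cast_nonneg M) hM 2
      _ = E := h
  have hsum : ∑ m ∈ Finset.range (M + 1),
      max (5 : ℝ)
        ((Real.sin (π / (2 * (2 * (m : ℝ) + 3))) ^ 2 * E) *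
          Real.log (Real.sin (π / (2 * (2 * (m : ℝ) + 3))) ^ 2 * E))
      ≤ ∑ m ∈ Finset.range (M + 1),
        (5 + (π^2/4 * (1/(2*(m:ℝ)+3)^2)) * (E * L)) :=
    Finset.sum_le_sum fun m _ => term_bound E hE1 m
  have hsum2 : ∑ m ∈ Finset.range (M + 1),
      (5 + (π^2/4 * (1/(2*(m:ℝ)+3)^2)) * (E * L))
      = 5 * (M+1) + (π^2/4) * (∑ m ∈ Finset.range (M + 1), (1:ℝ)/(2*(m:ℝ)+3)^2) * (E * L) := by
    rw [Finset.sum_add_distrib, Finset.sum_const, Finset.card_range, nsmul_eq_mul]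
    have h : ∀ m:ℕ, π^2/4 * (1/(2*(m:ℝ)+3)^2) * (E*L) = (1/(2*(m:ℝ)+3)^2) * (π^2/4*(E*L)) :=
      fun m => by ring
    rw [Finset.sum_congr rfl fun m _ => h m, ← Finset.sum_mul]
    push_cast
    ring
  have hS : ∑ m ∈ Finset.range (M + 1), (1:ℝ)/(2*(m:ℝ)+3)^2 ≤ 1/4 := by
    have := sum_inv_sq (M+1)
    have h1 : (0:ℝ) < 4*(((M+1):ℕ):ℝ)+4 := by positivity
    have h2 : 0 ≤ 1/(4*((((M+1):ℕ):ℝ)+1)) := by positivity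
    push_cast at this h2 ⊢
    linarith
  have hpi : π^2 ≤ 10 := by nlinarith [Real.pi_lt_d2, Real.pi_gt_three]
  have hEL : (6144:ℝ) ≤ E * L := by nlinarith
  have hS0 : 0 ≤ ∑ m ∈ Finset.range (M + 1), (1:ℝ)/(2*(m:ℝ)+3)^2 :=
    Finset.sum_nonneg fun m _ => by positivity
  have hcoef : (π^2/4) * (∑ m ∈ Finset.range (M + 1), (1:ℝ)/(2*(m:ℝ)+3)^2) * (E*L)
      ≤ (5/8) * (E*L) := by
    have hEL0 : 0 ≤ E * L := by positivity
    have : (π^2/4) * (∑ m ∈ Finset.range (M + 1), (1:ℝ)/(2*(m:ℝ)+3)^2) ≤ 5/8 := by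
      nlinarith
    nlinarith
  have hfin : 5 * ((M:ℝ)+1) + (5/8) * (E*L) < E * L := by
    have hM0 : (0:ℝ) ≤ (M:ℝ) := Nat.cast_nonneg M
    nlinarith [sq_nonneg ((M:ℝ) - 10)]
  calc ∑ m ∈ Finset.range (M + 1),
      max (5 : ℝ)
        ((Real.sin (π / (2 * (2 * (m : ℝ) + 3))) ^ 2 * E) *
          Real.log (Real.sin (π / (2 * (2 * (m : ℝ) + 3))) ^ 2 * E))
      ≤ 5 * ((M:ℝ)+1) + (π^2/4) * (∑ m ∈ Finset.range (M + 1), (1:ℝ)/(2*(m:ℝ)+3)^2) * (E*L) := by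
        rw [← hsum2] at *; exact hsum
    _ ≤ 5 * ((M:ℝ)+1) + (5/8) * (E*L) := by linarith
    _ < E * L := hfin
end

section
/- Let m ∈ ℕ and let θ be a real number with π/(2(2m+3)) < θ ≤ π/(2(2m+1)). Then 1 − sin²(π/(2m+3)) < sin²((2m+1)θ) ≤ 1. -/
open Real

/-- If `π/(2(2m+3)) < θ ≤ π/(2(2m+1))`, then
`1 − sin²(π/(2m+3)) < sin²((2m+1)θ) ≤ 1`. -/
theorem stmt_11 (m : ℕ) (θ : ℝ)
    (h₁ : π / (2 * (2 * (m : ℝ) + 3)) < θ)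
    (h₂ : θ ≤ π / (2 * (2 * (m : ℝ) + 1))) :
    1 - Real.sin (π / (2 * (m : ℝ) + 3)) ^ 2 < Real.sin ((2 * (m : ℝ) + 1) * θ) ^ 2 ∧
      Real.sin ((2 * (m : ℝ) + 1) * θ) ^ 2 ≤ 1 := by
  have hm : (0:ℝ) ≤ (m:ℝ) := Nat.cast_nonneg m
  have h1 : (0:ℝ) < 2 * (m:ℝ) + 1 := by linarith
  have h3 : (0:ℝ) < 2 * (m:ℝ) + 3 := by linarith
  have hπ := Real.pi_pos
  set x := (2 * (m:ℝ) + 1) * θ with hx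
  set a := π / (2 * (m:ℝ) + 3) with ha
  have hx2 : x ≤ π / 2 := by
    have := mul_le_mul_of_nonneg_left h₂ h1.le
    calc x ≤ (2 * (m:ℝ) + 1) * (π / (2 * (2 * (m:ℝ) + 1))) := this
      _ = π / 2 := by field_simp
  have hx1 : π / 2 - a < x := by
    have := mul_lt_mul_of_pos_left h₁ h1
    have heq : (2 * (m:ℝ) + 1) * (π / (2 * (2 * (m:ℝ) + 3))) = π / 2 - a := by
      rw [ha]; field_simp; ring
    linarith [heq ▸ this]
  have ha2 : a ≤ π / 2 := by
    rw [ha, div_le_div_iff₀ h3 two_pos]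
    nlinarith
  have ha0 : 0 < a := div_pos hπ h3
  have hcos : Real.cos a = Real.sin (π / 2 - a) := (Real.sin_pi_div_two_sub a).symm
  have hsinlt : Real.sin (π / 2 - a) < Real.sin x := by
    apply Real.strictMonoOn_sin ⟨by linarith, by linarith⟩ ⟨by linarith, by linarith⟩ hx1
  have hcosnn : 0 ≤ Real.cos a := Real.cos_nonneg_of_mem_Icc ⟨by linarith, ha2⟩
  constructor
  · have hsq : Real.cos a ^ 2 < Real.sin x ^ 2 := by
      apply pow_lt_pow_left₀ _ hcosnn (by norm_num)
      rw [hcos]; exact hsinlt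
    have := Real.sin_sq_add_cos_sq a
    nlinarith
  · exact Real.sin_sq_le_one x
end
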